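/- arXiv:1008.5270 — 6 statements merged into one kernel-verified Lean document; each statement's English description precedes it below -/
import Mathlib

section
/- Let p ∈ (0,1) and w₀ ∈ ℂ with w₀ ≠ 0 and |p + 1/p + 1/w₀| ≤ 2. For every complex number A satisfying |A − (p + 1/p + w₀) + (w₀/4)(p + 1/p + 1/w₀)²| ≤ |w₀| (1 − (1/4)|p + 1/p + 1/w₀|²), there exists f ∈ Σ*(p,w₀) with a₂(f) = A. That is, the region of variability of a₂(f) over Σ*(p,w₀) is exactly the closed disc described by this inequality. -/
open Complex Metric Set

/-- The second Taylor coefficient `a₂(f) = f''(0)/2`. -/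
noncomputable def a2 (f : ℂ → ℂ) : ℂ := iteratedDeriv 2 f 0 / 2

/-- `f` belongs to the class `Σ*(p, w₀)` with associated holomorphic function `P`:
`f` is holomorphic on the unit disc except for a simple pole at `p`, `f 0 = 0`,
`f' 0 = 1`, `f` omits `w₀`, and
`P z = -z f'(z)/(f z - w₀) - p/(z - p) + p z/(1 - p z)` extends holomorphically
to the unit disc with `P 0 = 1` and `Re (P z) > 0` there. -/
def SigmaStarWith (p : ℝ) (w₀ : ℂ) (f P : ℂ → ℂ) : Prop :=
  (∃ g : ℂ → ℂ, DifferentiableOn ℂ g (ball (0 : ℂ) 1) ∧ g p ≠ 0 ∧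
      ∀ z ∈ ball (0 : ℂ) 1, z ≠ (p : ℂ) → f z = g z / (z - p)) ∧
  f 0 = 0 ∧ deriv f 0 = 1 ∧
  (∀ z ∈ ball (0 : ℂ) 1, z ≠ (p : ℂ) → f z ≠ w₀) ∧
  DifferentiableOn ℂ P (ball (0 : ℂ) 1) ∧ P 0 = 1 ∧
  (∀ z ∈ ball (0 : ℂ) 1, 0 < (P z).re) ∧
  (∀ z ∈ ball (0 : ℂ) 1, z ≠ (p : ℂ) →
    P z = -z * deriv f z / (f z - w₀) - p / (z - p) + p * z / (1 - p * z))

/-- `f` belongs to the class `Σ*(p, w₀)`. -/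
def SigmaStar (p : ℝ) (w₀ : ℂ) (f : ℂ → ℂ) : Prop :=
  ∃ P : ℂ → ℂ, SigmaStarWith p w₀ f P

/-- `ω` is the Schwarz function associated to `P`, i.e. a holomorphic self-map of
the unit disc fixing `0` with `P = (1 + ω)/(1 - ω)`. -/
def SchwarzOf (P ω : ℂ → ℂ) : Prop :=
  DifferentiableOn ℂ ω (ball (0 : ℂ) 1) ∧
  MapsTo ω (ball (0 : ℂ) 1) (ball (0 : ℂ) 1) ∧ ω 0 = 0 ∧
  ∀ z ∈ ball (0 : ℂ) 1, P z = (1 + ω z) / (1 - ω z)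

/-
If `1 + z q(z)` has positive real part on the disc and `E' = -q E`, `E(0) = 1`, then
`f = w₀ + w₀ p E(z) / ((z - p)(1 - p z))` has exactly `1 + z q(z)` as its Carathéodory function,
since the logarithmic derivative of `(z - p)(1 - p z)` cancels the two correction terms. The
normalisation `f'(0) = 1` forces `q(0) = p + 1/p + 1/w₀`, and then
`a₂(f) = w₀ (q'(0) - p² - p⁻² - (q(0) - p - 1/p)²) / 2`. So the admissible values of `a₂` are
governed by the second coefficient of a Carathéodory function with prescribed first one; every
`q(0) = 2 b₁`, `q'(0) = 2 b₁² + 2 b₂` with `|b₂| ≤ 1 - |b₁|²` is attained by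
`1 + z q = (1 + z φ) / (1 - z φ)` for the self-map `φ(z) = (b₁ + c z) / (1 + b̄₁ c z)`,
`c = b₂ / (1 - |b₁|²)`, of the disc. A primitive of `q` on the disc supplies `E`.
-/

open ComplexConjugate

lemma exists_hasDerivAt_eq_neg_mul_self {q : ℂ → ℂ} {c : ℂ} {r : ℝ}
    (hq : DifferentiableOn ℂ q (ball c r)) :
    ∃ E : ℂ → ℂ, E c = 1 ∧ ∀ z ∈ ball c r, E z ≠ 0 ∧ HasDerivAt E (-q z * E z) z := by
  obtain ⟨F, hF0, hF⟩ := hq.isExactOn_ball.with_val_at c 0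
  refine ⟨fun z => exp (-F z), by simp [hF0], fun z hz => ⟨exp_ne_zero _, ?_⟩⟩
  simpa [mul_comm] using (hF z hz).neg.cexp

lemma one_sub_ne_zero_of_norm_lt_one {w : ℂ} (hw : ‖w‖ < 1) : 1 - w ≠ 0 := by
  rw [sub_ne_zero]
  rintro rfl
  simp at hw

lemma one_add_ne_zero_of_norm_lt_one {w : ℂ} (hw : ‖w‖ < 1) : 1 + w ≠ 0 := by
  simpa using one_sub_ne_zero_of_norm_lt_one (w := -w) (by simpa using hw)

lemma re_one_add_div_one_sub_pos {w : ℂ} (hw : ‖w‖ < 1) : 0 < ((1 + w) / (1 - w)).re := by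
  have hne := one_sub_ne_zero_of_norm_lt_one hw
  have hnum : (1 + w).re * (1 - w).re + (1 + w).im * (1 - w).im = 1 - ‖w‖ ^ 2 := by
    rw [Complex.sq_norm, Complex.normSq_apply]
    simp only [add_re, sub_re, one_re, add_im, sub_im, one_im]
    ring
  rw [Complex.div_re, ← add_div, hnum]
  exact div_pos (by nlinarith [norm_nonneg w]) (Complex.normSq_pos.2 hne)

lemma normSq_one_add_conj_mul_sub_normSq_add (b w : ℂ) :
    normSq (1 + conj b * w) - normSq (b + w) = (1 - normSq b) * (1 - normSq w) := by
  simp only [normSq_apply, add_re, add_im, mul_re, mul_im, conj_re, conj_im, one_re, one_im]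
  ring

lemma norm_add_le_norm_one_add_conj_mul {b w : ℂ} (hb : ‖b‖ ≤ 1) (hw : ‖w‖ ≤ 1) :
    ‖b + w‖ ≤ ‖1 + conj b * w‖ := by
  have key := normSq_one_add_conj_mul_sub_normSq_add b w
  rw [← Complex.sq_norm, ← Complex.sq_norm, ← Complex.sq_norm, ← Complex.sq_norm] at key
  refine le_of_sq_le_sq ?_ (norm_nonneg _)
  nlinarith [mul_nonneg (sub_nonneg.2 (pow_le_one₀ (n := 2) (norm_nonneg b) hb))
    (sub_nonneg.2 (pow_le_one₀ (n := 2) (norm_nonneg w) hw))]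

lemma exists_mapsTo_closedBall_hasDerivAt_zero {b₁ b₂ : ℂ} (hb₁ : ‖b₁‖ ≤ 1)
    (hb₂ : ‖b₂‖ ≤ 1 - ‖b₁‖ ^ 2) :
    ∃ φ : ℂ → ℂ, DifferentiableOn ℂ φ (ball 0 1) ∧ MapsTo φ (ball 0 1) (closedBall 0 1) ∧
      φ 0 = b₁ ∧ HasDerivAt φ b₂ 0 := by
  set c : ℂ := b₂ / (1 - ‖b₁‖ ^ 2 : ℝ)
  have hc : ‖c‖ ≤ 1 := by
    rw [norm_div, norm_real, Real.norm_eq_abs, abs_of_nonneg ((norm_nonneg _).trans hb₂)]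
    exact div_le_one_of_le₀ hb₂ ((norm_nonneg _).trans hb₂)
  -- when `‖b₁‖ = 1` the division above is junk, but then `b₂ = 0` as well
  have hcb : c * (1 - conj b₁ * b₁) = b₂ := by
    rw [conj_mul', ← ofReal_pow, ← ofReal_one, ← ofReal_sub]
    rcases eq_or_ne (1 - ‖b₁‖ ^ 2) 0 with h | h
    · rw [h] at hb₂ ⊢
      simp_all
    · exact div_mul_cancel₀ _ (ofReal_ne_zero.2 h)
  have hden : ∀ z ∈ ball (0 : ℂ) 1, 1 + conj b₁ * (c * z) ≠ 0 := fun z hz =>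
    one_add_ne_zero_of_norm_lt_one <| by
      rw [mem_ball_zero_iff] at hz
      rw [norm_mul, norm_mul, norm_conj]
      calc ‖b₁‖ * (‖c‖ * ‖z‖) ≤ 1 * (1 * ‖z‖) := by gcongr
        _ < 1 := by simpa using hz
  refine ⟨fun z => (b₁ + c * z) / (1 + conj b₁ * (c * z)), fun z hz => ?_, fun z hz => ?_,
    by simp, ?_⟩
  · have := hden z hz
    fun_prop (disch := assumption)
  · have hcz : ‖c * z‖ ≤ 1 := by
      rw [mem_ball_zero_iff] at hz
      rw [norm_mul]
      nlinarith [norm_nonneg c, norm_nonneg z]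
    rw [mem_closedBall_zero_iff, norm_div]
    exact div_le_one_of_le₀ (norm_add_le_norm_one_add_conj_mul hb₁ hcz) (norm_nonneg _)
  · have hnum : HasDerivAt (fun z : ℂ => b₁ + c * z) c 0 := by
      simpa using ((hasDerivAt_id (0 : ℂ)).const_mul c).const_add b₁
    have hden : HasDerivAt (fun z : ℂ => 1 + conj b₁ * (c * z)) (conj b₁ * c) 0 := by
      simpa using (((hasDerivAt_id (0 : ℂ)).const_mul c).const_mul (conj b₁)).const_add 1
    refine (hnum.fun_div hden (by simp)).congr_deriv ?_
    simp only [mul_zero, add_zero, one_pow, div_one, mul_one]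
    linear_combination hcb

lemma exists_caratheodory_coeffs {b₁ b₂ : ℂ} (hb₁ : ‖b₁‖ ≤ 1) (hb₂ : ‖b₂‖ ≤ 1 - ‖b₁‖ ^ 2) :
    ∃ q : ℂ → ℂ, DifferentiableOn ℂ q (ball 0 1) ∧ q 0 = 2 * b₁ ∧
      HasDerivAt q (2 * b₁ ^ 2 + 2 * b₂) 0 ∧ ∀ z ∈ ball (0 : ℂ) 1, 0 < (1 + z * q z).re := by
  obtain ⟨φ, hφd, hφ, hφ0, hφ'⟩ := exists_mapsTo_closedBall_hasDerivAt_zero hb₁ hb₂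
  have hzφ : ∀ z ∈ ball (0 : ℂ) 1, ‖z * φ z‖ < 1 := fun z hz => by
    have h1 := mem_closedBall_zero_iff.1 (hφ hz)
    rw [mem_ball_zero_iff] at hz
    rw [norm_mul]
    nlinarith [norm_nonneg z, norm_nonneg (φ z)]
  refine ⟨fun z => 2 * φ z / (1 - z * φ z), fun z hz => ?_, by simp [hφ0], ?_, fun z hz => ?_⟩
  · have := one_sub_ne_zero_of_norm_lt_one (hzφ z hz)
    have := hφd z hz
    fun_prop (disch := assumption)
  · have hden : HasDerivAt (fun z => 1 - z * φ z) (-(1 * φ 0 + 0 * b₂)) 0 :=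
      ((hasDerivAt_id 0).mul hφ').const_sub 1
    refine ((hφ'.const_mul 2).fun_div hden (by simp)).congr_deriv ?_
    rw [hφ0]
    ring
  · have hne := one_sub_ne_zero_of_norm_lt_one (hzφ z hz)
    convert re_one_add_div_one_sub_pos (hzφ z hz) using 3
    field_simp
    ring

lemma one_sub_mul_ne_zero {a z : ℂ} (ha : ‖a‖ ≤ 1) (hz : ‖z‖ < 1) : 1 - a * z ≠ 0 :=
  one_sub_ne_zero_of_norm_lt_one <| by
    rw [norm_mul]
    nlinarith [norm_nonneg a, norm_nonneg z]

noncomputable def sigmaStarOf (p : ℝ) (w₀ : ℂ) (E : ℂ → ℂ) (z : ℂ) : ℂ :=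
  w₀ + w₀ * p * E z / ((z - p) * (1 - p * z))

section SigmaStarOf

variable {p : ℝ} {w₀ : ℂ} {q E : ℂ → ℂ}

lemma hasDerivAt_sigmaStarOf {z : ℂ} (hE : HasDerivAt E (-q z * E z) z) (hzp : z ≠ p)
    (hpz : 1 - p * z ≠ 0) :
    HasDerivAt (sigmaStarOf p w₀ E)
      (-(sigmaStarOf p w₀ E z - w₀) * (q z + (1 / (z - p) - p / (1 - p * z)))) z := by
  have hzp' : z - p ≠ 0 := sub_ne_zero.2 hzp
  have hN : HasDerivAt (fun z : ℂ => (z - p) * (1 - p * z))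
      (1 * (1 - p * z) + (z - p) * -p) z := by
    refine ((hasDerivAt_id z).sub_const _).mul ?_
    simpa using ((hasDerivAt_id z).const_mul (p : ℂ)).const_sub 1
  refine (((hE.const_mul (w₀ * p)).div hN (mul_ne_zero hzp' hpz)).const_add w₀).congr_deriv ?_
  simp only [sigmaStarOf]
  field_simp
  ring

variable (hp0 : 0 < p) (hp1 : p < 1)
  (hE : ∀ z ∈ ball (0 : ℂ) 1, E z ≠ 0 ∧ HasDerivAt E (-q z * E z) z) (hE0 : E 0 = 1)
include hp0 hp1 hE hE0

lemma sigmaStarWith_sigmaStarOf (hw : w₀ ≠ 0) (hq : DifferentiableOn ℂ q (ball 0 1))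
    (hq0 : q 0 = p + 1 / p + 1 / w₀) (hre : ∀ z ∈ ball (0 : ℂ) 1, 0 < (1 + z * q z).re) :
    SigmaStarWith p w₀ (sigmaStarOf p w₀ E) (fun z => 1 + z * q z) := by
  have hp : ‖(p : ℂ)‖ < 1 := by rwa [norm_real, Real.norm_eq_abs, abs_of_pos hp0]
  have hpc : (p : ℂ) ≠ 0 := ofReal_ne_zero.2 hp0.ne'
  have hpz : ∀ z ∈ ball (0 : ℂ) 1, 1 - p * z ≠ 0 := fun z hz =>
    one_sub_mul_ne_zero hp.le (mem_ball_zero_iff.1 hz)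
  have h0 : (0 : ℂ) ∈ ball (0 : ℂ) 1 := mem_ball_self one_pos
  have hf0 : sigmaStarOf p w₀ E 0 = 0 := by
    simp only [sigmaStarOf, hE0]
    field_simp
    ring
  have hsub : ∀ z ∈ ball (0 : ℂ) 1, z ≠ p → sigmaStarOf p w₀ E z - w₀ ≠ 0 := fun z hz hzp => by
    simp only [sigmaStarOf, add_sub_cancel_left]
    exact div_ne_zero (mul_ne_zero (mul_ne_zero hw hpc) (hE z hz).1)
      (mul_ne_zero (sub_ne_zero.2 hzp) (hpz z hz))
  refine ⟨⟨fun z => w₀ * (z - p) + w₀ * p * E z / (1 - p * z), fun z hz => ?_, ?_,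
    fun z hz hzp => ?_⟩, hf0, ?_, fun z hz hzp => sub_ne_zero.1 (hsub z hz hzp), fun z hz => ?_,
    by simp, hre, fun z hz hzp => ?_⟩
  · have := (hE z hz).2.differentiableAt
    have := hpz z hz
    exact DifferentiableAt.differentiableWithinAt (by fun_prop (disch := assumption))
  · simpa using div_ne_zero (mul_ne_zero (mul_ne_zero hw hpc) (hE p (mem_ball_zero_iff.2 hp)).1)
      (hpz p (mem_ball_zero_iff.2 hp))
  · have := hpz z hz
    have : z - p ≠ 0 := sub_ne_zero.2 hzp
    simp only [sigmaStarOf]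
    field_simp
  · rw [(hasDerivAt_sigmaStarOf (hE 0 h0).2 (Ne.symm (by exact_mod_cast hp0.ne')) (hpz 0 h0)).deriv,
      hf0, hq0]
    field_simp
    ring
  · have := hq z hz
    fun_prop
  · have := hpz z hz
    have := hsub z hz hzp
    have : z - p ≠ 0 := sub_ne_zero.2 hzp
    rw [(hasDerivAt_sigmaStarOf (hE z hz).2 hzp (hpz z hz)).deriv]
    field_simp
    ring

lemma a2_sigmaStarOf {c₂ : ℂ} (hq : HasDerivAt q c₂ 0) :
    a2 (sigmaStarOf p w₀ E) = w₀ * (c₂ - p ^ 2 - 1 / p ^ 2 - (q 0 - p - 1 / p) ^ 2) / 2 := by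
  set f := sigmaStarOf p w₀ E
  set L : ℂ → ℂ := fun z => 1 / (z - p) - p / (1 - p * z)
  have hpc : (p : ℂ) ≠ 0 := ofReal_ne_zero.2 hp0.ne'
  have hf0 : f 0 = 0 := by
    simp only [f, sigmaStarOf, hE0]
    field_simp
    ring
  have hf' : ∀ᶠ z in nhds 0, HasDerivAt f (-(f z - w₀) * (q z + L z)) z := by
    filter_upwards [ball_mem_nhds (0 : ℂ) hp0] with z hz
    have hz : ‖z‖ < p := mem_ball_zero_iff.1 hz
    have hz1 : ‖z‖ < 1 := hz.trans hp1
    refine hasDerivAt_sigmaStarOf (hE z (mem_ball_zero_iff.2 hz1)).2 ?_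
      (one_sub_mul_ne_zero (by simp [abs_of_pos hp0, hp1.le]) hz1)
    rintro rfl
    simp [abs_of_pos hp0] at hz
  have hL : HasDerivAt L (-(1 / p ^ 2) - p ^ 2) 0 := by
    have h1 := (hasDerivAt_const (0 : ℂ) (1 : ℂ)).div ((hasDerivAt_id (0 : ℂ)).sub_const (p : ℂ))
      (by simpa using hpc)
    have h2 := (hasDerivAt_const (0 : ℂ) (p : ℂ)).div
      (((hasDerivAt_id (0 : ℂ)).const_mul (p : ℂ)).const_sub 1) (by simp)
    refine (h1.sub h2).congr_deriv ?_
    simp only [id, sub_zero, mul_zero, zero_sub]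
    field_simp
    ring
  have hf'0 := hf'.self_of_nhds
  have h2 := (hf'0.sub_const w₀).fun_neg.fun_mul (hq.fun_add hL)
  have hderiv : deriv f =ᶠ[nhds 0] fun z => -(f z - w₀) * (q z + L z) :=
    hf'.mono fun z hz => hz.deriv
  have hiter : iteratedDeriv 2 f 0 = deriv (fun z => -(f z - w₀) * (q z + L z)) 0 := by
    rw [iteratedDeriv_succ', iteratedDeriv_one, hderiv.deriv_eq]
  rw [a2, hiter, h2.deriv, hf0]
  simp only [L]
  field_simp
  ring

end SigmaStarOf

theorem stmt_1 (p : ℝ) (hp : 0 < p ∧ p < 1) (w₀ : ℂ) (hw : w₀ ≠ 0)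
    (hb : ‖(p : ℂ) + 1 / p + 1 / w₀‖ ≤ 2) (A : ℂ)
    (hA : ‖A - ((p : ℂ) + 1 / p + w₀) +
        (w₀ / 4) * ((p : ℂ) + 1 / p + 1 / w₀) ^ 2‖ ≤
      ‖w₀‖ *
        (1 - (1 / 4) * ‖(p : ℂ) + 1 / p + 1 / w₀‖ ^ 2)) :
    ∃ f : ℂ → ℂ, SigmaStar p w₀ f ∧ a2 f = A := by
  obtain ⟨hp0, hp1⟩ := hp
  have hb₁ : ‖((p : ℂ) + 1 / p + 1 / w₀) / 2‖ ≤ 1 := by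
    rw [norm_div, Complex.norm_two]
    linarith
  have hb₂ : ‖(A - ((p : ℂ) + 1 / p + w₀) + (w₀ / 4) * ((p : ℂ) + 1 / p + 1 / w₀) ^ 2) / w₀‖ ≤
      1 - ‖((p : ℂ) + 1 / p + 1 / w₀) / 2‖ ^ 2 := by
    rw [norm_div, norm_div, Complex.norm_two, div_le_iff₀ (norm_pos_iff.2 hw)]
    linarith
  obtain ⟨q, hq, hq0, hq', hre⟩ := exists_caratheodory_coeffs hb₁ hb₂
  obtain ⟨E, hE0, hE⟩ := exists_hasDerivAt_eq_neg_mul_self hq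
  refine ⟨sigmaStarOf p w₀ E,
    ⟨_, sigmaStarWith_sigmaStarOf hp0 hp1 hE hE0 hw hq (by rw [hq0]; ring) hre⟩, ?_⟩
  rw [a2_sigmaStarOf hp0 hp1 hE hE0 hq', hq0]
  have : (p : ℂ) ≠ 0 := ofReal_ne_zero.2 hp0.ne'
  field_simp
  ring
end

section
/- Let p ∈ (0,1), let w₀ ∈ ℂ with w₀ ≠ 0, and let f ∈ Σ*(p,w₀) have the expansion f(z) = z + Σ_{n≥2} aₙ(f) zⁿ for |z| < p. Then |a₂(f) − 1/p| ≤ p. -/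
/-!
Put `Q = P + 1 + p/(z - p) + p⁻¹/(z - p⁻¹)`, the defining relation of `P` with the rational part
moved to the left (note `pz/(1 - pz) = -1 - p⁻¹/(z - p⁻¹)`). Then `Q (f - w₀) = -z f'` near `0`,
and comparing Taylor coefficients of order one and two gives `u w₀ = 1` and
`Q''(0) w₀ = 2u + 4a₂` with `u = Q'(0) = P'(0) - 1/p - p`. Eliminating `w₀`,
`4u (a₂ - 1/p) = (P''(0) - P'(0)²) - (P'(0) - 2p)²`.

Carathéodory's bound `|P''(0) - P'(0)²| ≤ 4 - |P'(0)|²` (Schwarz–Pick at the origin applied to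
`ω(z)/z`, where `P = (1 + ω)/(1 - ω)`) turns this into
`4|u||a₂ - 1/p| ≤ 4 + 4p² - 4p Re P'(0) = -4p Re u ≤ 4p|u|`.
-/

open Complex Metric Set

open ComplexConjugate Filter Topology
open scoped Nat

section IteratedDeriv

variable {𝕜 : Type*} [NontriviallyNormedField 𝕜]

theorem iteratedDeriv_two_fun_mul {𝔸 : Type*} [NormedRing 𝔸] [NormedAlgebra 𝕜 𝔸] {f g : 𝕜 → 𝔸}
    {x : 𝕜} (hf : ContDiffAt 𝕜 2 f x) (hg : ContDiffAt 𝕜 2 g x) :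
    iteratedDeriv 2 (fun z => f z * g z) x =
      f x * iteratedDeriv 2 g x + 2 * (deriv f x * deriv g x) + iteratedDeriv 2 f x * g x := by
  rw [iteratedDeriv_fun_mul hf hg]
  simp [Finset.sum_range_succ, mul_assoc]

theorem iteratedDeriv_two_eq_two_mul_deriv_dslope [CompleteSpace 𝕜] {ω : 𝕜 → 𝕜}
    (h : AnalyticAt 𝕜 ω 0) : iteratedDeriv 2 ω 0 = 2 * deriv (dslope ω 0) 0 := by
  have hψ : AnalyticAt 𝕜 (dslope ω 0) 0 := by
    obtain ⟨q, hq⟩ := h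
    exact hq.has_fpower_series_dslope_fslope.analyticAt
  have hω : ω = fun z => ω 0 + z * dslope ω 0 z := by
    ext z
    have := sub_smul_dslope ω 0 z
    rw [sub_zero, smul_eq_mul] at this
    rw [this, add_sub_cancel]
  conv_lhs => rw [hω]
  rw [iteratedDeriv_const_add two_pos, iteratedDeriv_two_fun_mul contDiffAt_fun_id hψ.contDiffAt]
  simp [iteratedDeriv_fun_id_zero]

theorem iteratedDeriv_div_sub_self_zero {a : 𝕜} (ha : a ≠ 0) (n : ℕ) :
    iteratedDeriv n (fun z => a / (z - a)) 0 = -(n ! / a ^ n) := by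
  have h := congrFun (iter_deriv_inv_linear_sub n 1 a) 0
  simp only [div_eq_mul_inv, one_mul] at h ⊢
  rw [iteratedDeriv_const_mul_field, iteratedDeriv_eq_iterate, h, zero_sub, one_pow, mul_one,
    show (-1 - n : ℤ) = -((n + 1 : ℕ) : ℤ) by push_cast; ring, zpow_neg, zpow_natCast, neg_pow a]
  field_simp
  ring

theorem analyticAt_div_sub_self_zero {a : 𝕜} (ha : a ≠ 0) :
    AnalyticAt 𝕜 (fun z => a / (z - a)) 0 :=
  analyticAt_const.div (analyticAt_id.sub analyticAt_const) (by simpa using ha)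

theorem analyticAt_one_add_div_sub_self_add_inv_div_sub_inv_zero {a : 𝕜} (ha : a ≠ 0) :
    AnalyticAt 𝕜 (fun z => 1 + (a / (z - a) + a⁻¹ / (z - a⁻¹))) 0 :=
  analyticAt_const.fun_add
    ((analyticAt_div_sub_self_zero ha).fun_add (analyticAt_div_sub_self_zero (inv_ne_zero ha)))

theorem iteratedDeriv_one_add_div_sub_self_add_inv_div_sub_inv_zero [CompleteSpace 𝕜] {a : 𝕜}
    (ha : a ≠ 0) {n : ℕ} (hn : 0 < n) :
    iteratedDeriv n (fun z => 1 + (a / (z - a) + a⁻¹ / (z - a⁻¹))) 0 =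
      -(n ! / a ^ n + n ! * a ^ n) := by
  rw [iteratedDeriv_const_add hn, iteratedDeriv_fun_add
    (analyticAt_div_sub_self_zero ha).contDiffAt
    (analyticAt_div_sub_self_zero (inv_ne_zero ha)).contDiffAt,
    iteratedDeriv_div_sub_self_zero ha, iteratedDeriv_div_sub_self_zero (inv_ne_zero ha),
    inv_pow, div_inv_eq_mul]
  ring

end IteratedDeriv

theorem one_sub_conj_mul_ne_zero {a w : ℂ} (ha : ‖a‖ < 1) (hw : ‖w‖ ≤ 1) :
    1 - conj a * w ≠ 0 := by
  have : ‖conj a * w‖ < 1 := by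
    rw [norm_mul, norm_conj]
    exact mul_lt_one_of_nonneg_of_lt_one_left (norm_nonneg a) ha hw
  intro h
  rw [← sub_eq_zero.1 h, norm_one] at this
  exact this.false

theorem norm_sub_div_one_sub_conj_mul_le_one {a w : ℂ} (ha : ‖a‖ < 1) (hw : ‖w‖ ≤ 1) :
    ‖(w - a) / (1 - conj a * w)‖ ≤ 1 := by
  rw [norm_div, div_le_one (norm_pos_iff.2 (one_sub_conj_mul_ne_zero ha hw))]
  have key : ‖1 - conj a * w‖ ^ 2 - ‖w - a‖ ^ 2 = (1 - ‖a‖ ^ 2) * (1 - ‖w‖ ^ 2) := by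
    simp only [Complex.sq_norm, normSq_apply, sub_re, sub_im, mul_re, mul_im, conj_re, conj_im,
      one_re, one_im]
    ring
  have : ‖w - a‖ ^ 2 ≤ ‖1 - conj a * w‖ ^ 2 := by
    nlinarith [mul_nonneg (sub_nonneg.2 (pow_le_one₀ (n := 2) (norm_nonneg a) ha.le))
      (sub_nonneg.2 (pow_le_one₀ (n := 2) (norm_nonneg w) hw))]
  exact (pow_le_pow_iff_left₀ (norm_nonneg _) (norm_nonneg _) two_ne_zero).1 this

/-- Schwarz–Pick lemma at the origin. -/
theorem norm_deriv_le_one_sub_sq_norm_of_mapsTo {ψ : ℂ → ℂ}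
    (hd : DifferentiableOn ℂ ψ (ball 0 1)) (hψ : MapsTo ψ (ball 0 1) (closedBall 0 1)) :
    ‖deriv ψ 0‖ ≤ 1 - ‖ψ 0‖ ^ 2 := by
  have h0 : (0 : ℂ) ∈ ball (0 : ℂ) 1 := mem_ball_self one_pos
  set a := ψ 0
  have hb : ∀ z ∈ ball (0 : ℂ) 1, ‖ψ z‖ ≤ 1 := fun z hz => by simpa using hψ hz
  rcases (hb 0 h0).eq_or_lt with ha | ha
  · have hmax : IsMaxOn (norm ∘ ψ) (ball 0 1) 0 := fun z hz => by simpa [ha] using hb z hz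
    have hconst : ψ =ᶠ[𝓝 0] fun _ => a := by
      filter_upwards [isOpen_ball.mem_nhds h0] with z hz using
        eqOn_of_isPreconnected_of_isMaxOn_norm (convex_ball 0 1).isPreconnected isOpen_ball hd
          h0 hmax hz
    simp [hconst.deriv_eq, a, ha]
  · have hden : ∀ z ∈ ball (0 : ℂ) 1, 1 - conj a * ψ z ≠ 0 := fun z hz =>
      one_sub_conj_mul_ne_zero ha (hb z hz)
    set χ := fun z => (ψ z - a) / (1 - conj a * ψ z)
    have hχd : DifferentiableOn ℂ χ (ball 0 1) :=
      (hd.sub_const a).div ((hd.const_mul _).const_sub 1) hden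
    have hχ : MapsTo χ (ball 0 1) (closedBall (χ 0) 1) := fun z hz => by
      simpa [χ, a] using norm_sub_div_one_sub_conj_mul_le_one ha (hb z hz)
    have hψ' : HasDerivAt ψ (deriv ψ 0) 0 :=
      (hd.differentiableAt (isOpen_ball.mem_nhds h0)).hasDerivAt
    have hχ' : deriv χ 0 = deriv ψ 0 / (1 - ‖a‖ ^ 2 : ℝ) := by
      have hne : (1 - ‖a‖ ^ 2 : ℂ) ≠ 0 := by rw [← conj_mul']; exact hden 0 h0
      rw [((hψ'.sub_const a).fun_div ((hψ'.const_mul _).const_sub 1) (hden 0 h0)).deriv,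
        conj_mul']
      push_cast
      field_simp
      ring
    have := norm_deriv_le_one_of_mapsTo_ball hχd hχ one_pos
    rwa [hχ', norm_div, norm_real, Real.norm_of_nonneg (by nlinarith [norm_nonneg a]),
      div_le_one (by nlinarith [norm_nonneg a])] at this

theorem norm_sub_one_lt_norm_add_one_of_re_pos {z : ℂ} (hz : 0 < z.re) :
    ‖z - 1‖ < ‖z + 1‖ := by
  rw [← sq_lt_sq₀ (norm_nonneg _) (norm_nonneg _), Complex.sq_norm, Complex.sq_norm,
    normSq_apply, normSq_apply]
  simp only [sub_re, sub_im, add_re, add_im, one_re, one_im]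
  nlinarith

theorem exists_schwarzOf_of_re_pos {P : ℂ → ℂ} (hd : DifferentiableOn ℂ P (ball 0 1))
    (h0 : P 0 = 1) (hre : ∀ z ∈ ball (0 : ℂ) 1, 0 < (P z).re) :
    ∃ ω, SchwarzOf P ω := by
  have hP1 : ∀ z ∈ ball (0 : ℂ) 1, P z + 1 ≠ 0 := fun z hz h => by
    have := hre z hz
    rw [add_eq_zero_iff_eq_neg.1 h] at this
    norm_num at this
  refine ⟨fun z => (P z - 1) / (P z + 1), (hd.sub_const 1).div (hd.add_const 1) hP1,
    fun z hz => ?_, by simp [h0], fun z hz => ?_⟩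
  · rw [mem_ball_zero_iff, norm_div, div_lt_one (norm_pos_iff.2 (hP1 z hz))]
    exact norm_sub_one_lt_norm_add_one_of_re_pos (hre z hz)
  · have := hP1 z hz
    field_simp
    ring

namespace SchwarzOf

variable {P ω : ℂ → ℂ}

theorem deriv_eq_and_iteratedDeriv_two_eq (h : SchwarzOf P ω) :
    deriv P 0 = 2 * deriv ω 0 ∧
      iteratedDeriv 2 P 0 - deriv P 0 ^ 2 = 2 * iteratedDeriv 2 ω 0 := by
  obtain ⟨hd, hmaps, h0, hP⟩ := h
  have hz0 : ball (0 : ℂ) 1 ∈ 𝓝 0 := isOpen_ball.mem_nhds (mem_ball_self one_pos)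
  have hω1 : ∀ z ∈ ball (0 : ℂ) 1, 1 - ω z ≠ 0 := fun z hz h => by
    have := hmaps hz
    rw [← sub_eq_zero.1 h, mem_ball_zero_iff, norm_one] at this
    exact this.false
  have hP0 : P 0 = 1 := by simp [hP 0 (mem_of_mem_nhds hz0), h0]
  have hωa : AnalyticAt ℂ ω 0 := hd.analyticAt hz0
  have h1ω : AnalyticAt ℂ (fun z => 1 - ω z) 0 := analyticAt_const.fun_sub hωa
  have hPa : AnalyticAt ℂ P 0 := by
    refine (((analyticAt_const (v := (1 : ℂ))).fun_add hωa).fun_div h1ω (by simp [h0])).congr ?_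
    filter_upwards [hz0] with z hz using (hP z hz).symm
  have hid : (fun z => (1 - ω z) * P z) =ᶠ[𝓝 0] fun z => 1 + ω z := by
    filter_upwards [hz0] with z hz
    rw [hP z hz, mul_div_cancel₀ _ (hω1 z hz)]
  have h1 : deriv P 0 = 2 * deriv ω 0 := by
    have := hid.deriv_eq
    rw [deriv_fun_mul h1ω.differentiableAt hPa.differentiableAt] at this
    norm_num [h0, hP0] at this
    linear_combination this
  refine ⟨h1, ?_⟩
  have := hid.iteratedDeriv_eq 2
  rw [iteratedDeriv_two_fun_mul h1ω.contDiffAt hPa.contDiffAt,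
    iteratedDeriv_fun_sub contDiffAt_const hωa.contDiffAt,
    iteratedDeriv_fun_add contDiffAt_const hωa.contDiffAt] at this
  simp [h0, hP0, iteratedDeriv_const] at this
  linear_combination this - deriv P 0 * h1

/-- Carathéodory's bound `|c₂ - c₁²/2| ≤ 2 - |c₁|²/2` for `P = 1 + c₁ z + c₂ z² + ⋯`. -/
theorem norm_iteratedDeriv_two_sub_deriv_sq_le (h : SchwarzOf P ω) :
    ‖iteratedDeriv 2 P 0 - deriv P 0 ^ 2‖ ≤ 4 - ‖deriv P 0‖ ^ 2 := by
  obtain ⟨h1, h2⟩ := h.deriv_eq_and_iteratedDeriv_two_eq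
  obtain ⟨hd, hmaps, h0, -⟩ := h
  have hz0 : ball (0 : ℂ) 1 ∈ 𝓝 0 := isOpen_ball.mem_nhds (mem_ball_self one_pos)
  have hψ : MapsTo (dslope ω 0) (ball 0 1) (closedBall 0 1) := fun z hz => by
    simpa using norm_dslope_le_div_of_mapsTo_ball hd
      (by simpa [h0] using hmaps.mono_right ball_subset_closedBall) hz
  have hSP := norm_deriv_le_one_sub_sq_norm_of_mapsTo ((differentiableOn_dslope hz0).2 hd) hψ
  rw [dslope_same] at hSP
  rw [h2, iteratedDeriv_two_eq_two_mul_deriv_dslope (hd.analyticAt hz0), h1]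
  simp only [norm_mul, RCLike.norm_ofNat, mul_pow]
  nlinarith

end SchwarzOf

namespace SigmaStarWith

variable {p : ℝ} {w₀ : ℂ} {f P : ℂ → ℂ}

theorem analyticAt_zero (hp : p ≠ 0) (hf : SigmaStarWith p w₀ f P) : AnalyticAt ℂ f 0 := by
  obtain ⟨⟨g, hg, -, hfg⟩, -⟩ := hf
  have hball : ball (0 : ℂ) 1 ∈ 𝓝 0 := isOpen_ball.mem_nhds (mem_ball_self one_pos)
  have hp' : (0 : ℂ) ≠ p := by exact_mod_cast hp.symm
  refine ((hg.analyticAt hball).div (analyticAt_id.sub analyticAt_const)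
    (sub_ne_zero.2 hp')).congr ?_
  filter_upwards [hball, eventually_ne_nhds hp'] with z hz hzp using (hfg z hz hzp).symm

theorem mul_sub_eventuallyEq (hp : p ≠ 0) (hf : SigmaStarWith p w₀ f P) :
    (fun z => (P z + (1 + (p / (z - p) + (p : ℂ)⁻¹ / (z - (p : ℂ)⁻¹)))) * (f z - w₀))
      =ᶠ[𝓝 0] fun z => -(z * deriv f z) := by
  obtain ⟨-, -, -, hfw, -, -, -, hP⟩ := hf
  have hball : ball (0 : ℂ) 1 ∈ 𝓝 0 := isOpen_ball.mem_nhds (mem_ball_self one_pos)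
  have hpC : (p : ℂ) ≠ 0 := by exact_mod_cast hp
  filter_upwards [hball, eventually_ne_nhds hpC.symm, eventually_ne_nhds (inv_ne_zero hpC).symm]
    with z hz hzp hzq
  have h1 : z - p ≠ 0 := sub_ne_zero.2 hzp
  have h2 : z - (p : ℂ)⁻¹ ≠ 0 := sub_ne_zero.2 hzq
  have h3 : 1 - z * p ≠ 0 := by
    rw [show 1 - z * (p : ℂ) = -p * (z - (p : ℂ)⁻¹) by field_simp; ring]
    exact mul_ne_zero (neg_ne_zero.2 hpC) h2
  have h4 : f z - w₀ ≠ 0 := sub_ne_zero.2 (hfw z hz hzp)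
  rw [hP z hz hzp, show (p : ℂ)⁻¹ / (z - (p : ℂ)⁻¹) = -1 / (1 - p * z) by
    rw [div_eq_div_iff h2 (by rwa [mul_comm])]; field_simp; ring]
  field_simp
  ring

theorem coeff_relations (hp : p ≠ 0) (hf : SigmaStarWith p w₀ f P) :
    (deriv P 0 - (p : ℂ)⁻¹ - p) * w₀ = 1 ∧
      (iteratedDeriv 2 P 0 - 2 / p ^ 2 - 2 * p ^ 2) * w₀ =
        2 * (deriv P 0 - (p : ℂ)⁻¹ - p) + 4 * a2 f := by
  have hfa := hf.analyticAt_zero hp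
  have hkey := hf.mul_sub_eventuallyEq hp
  obtain ⟨-, hf0, hf'0, -, hPd, hP0, -⟩ := hf
  have hpC : (p : ℂ) ≠ 0 := by exact_mod_cast hp
  have hPa : AnalyticAt ℂ P 0 := hPd.analyticAt (isOpen_ball.mem_nhds (mem_ball_self one_pos))
  have hMa := analyticAt_one_add_div_sub_self_add_inv_div_sub_inv_zero hpC
  set R := fun z => P z + (1 + (p / (z - p) + (p : ℂ)⁻¹ / (z - (p : ℂ)⁻¹)))
  replace hkey : (fun z => R z * (f z - w₀)) =ᶠ[𝓝 0] fun z => -(z * deriv f z) := hkey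
  have hRa : AnalyticAt ℂ R 0 := hPa.fun_add hMa
  have hR0 : R 0 = 0 := by simp [R, hP0, hpC]
  have hR : ∀ n, 0 < n →
      iteratedDeriv n R 0 = iteratedDeriv n P 0 - (n ! / p ^ n + n ! * p ^ n) := fun n hn => by
    rw [iteratedDeriv_fun_add hPa.contDiffAt hMa.contDiffAt,
      iteratedDeriv_one_add_div_sub_self_add_inv_div_sub_inv_zero hpC hn, sub_eq_add_neg]
  have hR1 := hR 1 one_pos
  have hR2 := hR 2 two_pos
  rw [iteratedDeriv_one] at hR1
  have hfw : AnalyticAt ℂ (fun z => f z - w₀) 0 := hfa.fun_sub analyticAt_const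
  constructor
  · have := hkey.deriv_eq
    rw [deriv_fun_mul hRa.differentiableAt hfw.differentiableAt] at this
    simp [hR0, hR1, hf0, hf'0, deriv_fun_mul differentiableAt_fun_id hfa.deriv.differentiableAt]
      at this
    linear_combination this
  · have := hkey.iteratedDeriv_eq 2
    rw [iteratedDeriv_two_fun_mul hRa.contDiffAt hfw.contDiffAt] at this
    simp [hR0, hR1, hR2, hf0, hf'0, iteratedDeriv_fun_id_zero,
      iteratedDeriv_two_fun_mul contDiffAt_fun_id hfa.deriv.contDiffAt] at this
    have ha2 : a2 f = deriv (deriv f) 0 / 2 := by rw [a2, iteratedDeriv_succ, iteratedDeriv_one]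
    rw [ha2]
    linear_combination -this

end SigmaStarWith

theorem norm_sub_inv_le_of_coeff_relations {p : ℝ} (hp : 0 < p) {w₀ c₁ c₂ a : ℂ}
    (h₁ : (c₁ - (p : ℂ)⁻¹ - p) * w₀ = 1)
    (h₂ : (c₂ - 2 / p ^ 2 - 2 * p ^ 2) * w₀ = 2 * (c₁ - (p : ℂ)⁻¹ - p) + 4 * a)
    (hc : ‖c₂ - c₁ ^ 2‖ ≤ 4 - ‖c₁‖ ^ 2) :
    ‖a - (p : ℂ)⁻¹‖ ≤ p := by
  set u := c₁ - (p : ℂ)⁻¹ - p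
  have hpC : (p : ℂ) ≠ 0 := by exact_mod_cast hp.ne'
  have hu : 0 < ‖u‖ := norm_pos_iff.2 (left_ne_zero_of_mul_eq_one h₁)
  have key : 4 * u * (a - (p : ℂ)⁻¹) = (c₂ - c₁ ^ 2) - (c₁ - 2 * p) ^ 2 := by
    have : (c₂ - c₁ ^ 2) - (c₁ - 2 * p) ^ 2 =
        c₂ - 2 / p ^ 2 - 2 * p ^ 2 - 2 * u ^ 2 - 4 * u / p := by
      simp only [u]
      field_simp
      ring
    rw [this]
    linear_combination (c₂ - 2 / p ^ 2 - 2 * p ^ 2) * h₁ - u * h₂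
  have hsq : ‖c₁ - 2 * p‖ ^ 2 = ‖c₁‖ ^ 2 - 4 * p * c₁.re + 4 * p ^ 2 := by
    simp only [Complex.sq_norm, normSq_apply, sub_re, sub_im, mul_re, mul_im, ofReal_re,
      ofReal_im, re_ofNat, im_ofNat]
    ring
  have hre : -u.re ≤ ‖u‖ := (neg_le_abs _).trans (abs_re_le_norm u)
  have hure : u.re = c₁.re - p⁻¹ - p := by simp [u]
  refine le_of_mul_le_mul_left ?_ (mul_pos four_pos hu)
  calc 4 * ‖u‖ * ‖a - (p : ℂ)⁻¹‖ = ‖(c₂ - c₁ ^ 2) - (c₁ - 2 * p) ^ 2‖ := by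
        rw [← key, norm_mul, norm_mul, RCLike.norm_ofNat]
    _ ≤ ‖c₂ - c₁ ^ 2‖ + ‖c₁ - 2 * p‖ ^ 2 := by rw [← norm_pow]; exact norm_sub_le _ _
    _ ≤ 4 * p * -u.re := by
        rw [hsq, hure]
        field_simp
        linarith
    _ ≤ 4 * ‖u‖ * p := by nlinarith

theorem stmt_2_general (p : ℝ) (hp : 0 < p ∧ p < 1) (w₀ : ℂ)
    (f : ℂ → ℂ) (hf : SigmaStar p w₀ f) :
    ‖a2 f - 1 / p‖ ≤ p := by
  obtain ⟨P, hfP⟩ := hf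
  obtain ⟨h₁, h₂⟩ := hfP.coeff_relations hp.1.ne'
  obtain ⟨-, -, -, -, hPd, hP0, hPre, -⟩ := hfP
  obtain ⟨ω, hω⟩ := exists_schwarzOf_of_re_pos hPd hP0 hPre
  rw [one_div]
  exact norm_sub_inv_le_of_coeff_relations hp.1 h₁ h₂ hω.norm_iteratedDeriv_two_sub_deriv_sq_le

theorem stmt_2 (p : ℝ) (hp : 0 < p ∧ p < 1) (w₀ : ℂ) (hw : w₀ ≠ 0)
    (f : ℂ → ℂ) (hf : SigmaStar p w₀ f) :
    ‖a2 f - 1 / p‖ ≤ p :=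
  stmt_2_general p hp w₀ f hf
end

section
/- Let p ∈ (0,1), let w₀ ∈ ℂ with w₀ ≠ 0, let f ∈ Σ*(p,w₀) with associated function P holomorphic on 𝔻, and write P(z) = 1 + b₁ z + b₂ z² + ⋯. Then b₂ = p² + 1/p² + (b₁ − (p + 1/p))² + 2 a₂(f) (b₁ − (p + 1/p)). -/
open Complex Metric Set Filter Topology Nat

section

variable {𝕜 : Type*} [NontriviallyNormedField 𝕜]

theorem iteratedDeriv_inv_one_sub_mul_zero (c : 𝕜) (k : ℕ) :
    iteratedDeriv k (fun z => (1 - c * z)⁻¹) 0 = k ! * c ^ k := by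
  have h := congr_fun (iter_deriv_inv_linear k (-c) 1) 0
  simp only [neg_mul, ← sub_eq_neg_add, mul_zero, zero_add, one_zpow, mul_one] at h
  rw [iteratedDeriv_eq_iterate, h, mul_right_comm, ← mul_pow, mul_comm]
  simp

theorem iteratedDeriv_id_mul_zero {g : 𝕜 → 𝕜} {n : ℕ} (hg : ContDiffAt 𝕜 (n + 1) g 0) :
    iteratedDeriv (n + 1) (fun z => z * g z) 0 = (n + 1) * iteratedDeriv n g 0 := by
  rw [iteratedDeriv_fun_mul (by fun_prop) hg]
  simp [iteratedDeriv_fun_id_zero]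

theorem iteratedDeriv_two_eq_of_mul_eventuallyEq [CompleteSpace 𝕜] {f Q : 𝕜 → 𝕜} {w : 𝕜}
    (hf : AnalyticAt 𝕜 f 0) (hQ : AnalyticAt 𝕜 Q 0)
    (hfQ : (fun z => (f z - w) * Q z) =ᶠ[𝓝 0] fun z => -(z * deriv f z))
    (hQ0 : Q 0 = 0) (hf'0 : deriv f 0 = 1) :
    iteratedDeriv 2 Q 0 = 2 * deriv Q 0 ^ 2 + 2 * iteratedDeriv 2 f 0 * deriv Q 0 := by
  have first := hfQ.iteratedDeriv_eq 1
  have second := hfQ.iteratedDeriv_eq 2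
  rw [iteratedDeriv_fun_neg, iteratedDeriv_id_mul_zero hf.deriv.contDiffAt,
    iteratedDeriv_fun_mul (f := fun z => f z - w) (hf.sub analyticAt_const).contDiffAt
      hQ.contDiffAt] at first second
  simp only [Finset.sum_range_succ, Finset.range_one, Finset.sum_singleton, choose_succ_self_right,
    choose_self, choose_zero_right, iteratedDeriv_zero, iteratedDeriv_succ', deriv_sub_const_fun,
    hQ0, hf'0, Nat.add_one_sub_one, tsub_zero, tsub_self, reduceAdd, cast_zero, cast_one,
    cast_ofNat, zero_add, add_zero, one_mul, mul_one, mul_zero] at first second ⊢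
  linear_combination (-deriv Q 0) * second + deriv (deriv Q) 0 * first

noncomputable def poleTerm (p z : 𝕜) : 𝕜 := -p / (z - p) + p * z / (1 - p * z)

theorem poleTerm_eventuallyEq_inv_one_sub {p : 𝕜} (hp : p ≠ 0) :
    poleTerm p =ᶠ[𝓝 0] fun z => -1 + ((1 - p⁻¹ * z)⁻¹ + (1 - p * z)⁻¹) := by
  have hne : ∀ᶠ z in 𝓝 (0 : 𝕜), 1 - p * z ≠ 0 ∧ z - p ≠ 0 := by
    refine (ContinuousAt.eventually_ne ?_ (by simp)).and (ContinuousAt.eventually_ne ?_ (by simpa))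
    all_goals fun_prop
  filter_upwards [hne] with z ⟨h1, h2⟩
  have h3 : p - z ≠ 0 := by rwa [← neg_sub, neg_ne_zero]
  have hinv : 1 - p⁻¹ * z = (p - z) / p := by field_simp
  simp only [poleTerm, hinv]
  field_simp
  ring

theorem iteratedDeriv_poleTerm_zero {p : 𝕜} (hp : p ≠ 0) {n : ℕ} (hn : 0 < n) :
    iteratedDeriv n (poleTerm p) 0 = n ! * (p⁻¹ ^ n + p ^ n) := by
  rw [(poleTerm_eventuallyEq_inv_one_sub hp).iteratedDeriv_eq, iteratedDeriv_const_add hn,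
    iteratedDeriv_fun_add, iteratedDeriv_inv_one_sub_mul_zero, iteratedDeriv_inv_one_sub_mul_zero,
    mul_add]
  all_goals exact ContDiffAt.inv (by fun_prop) (by simp)

theorem analyticAt_poleTerm_zero {p : 𝕜} (hp : p ≠ 0) : AnalyticAt 𝕜 (poleTerm p) 0 := by
  unfold poleTerm
  fun_prop (disch := simp [hp])

end

namespace SigmaStarWith

variable {p : ℝ} {w₀ : ℂ} {f P : ℂ → ℂ}

theorem analyticAt (hf : SigmaStarWith p w₀ f P) {z : ℂ} (hz : z ∈ ball (0 : ℂ) 1)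
    (hzp : z ≠ p) : AnalyticAt ℂ f z := by
  obtain ⟨⟨g, hg, -, hfg⟩, -⟩ := hf
  have hU : ball (0 : ℂ) 1 ∩ {(p : ℂ)}ᶜ ∈ 𝓝 z :=
    inter_mem (isOpen_ball.mem_nhds hz) (isOpen_compl_singleton.mem_nhds hzp)
  refine DifferentiableOn.analyticAt ?_ hU
  refine ((hg.mono inter_subset_left).div (by fun_prop) fun x hx => sub_ne_zero.mpr hx.2).congr ?_
  exact fun x hx => hfg x hx.1 hx.2

theorem mul_sub_poleTerm_eventuallyEq (hf : SigmaStarWith p w₀ f P) (hp : (p : ℂ) ≠ 0) :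
    (fun z => (f z - w₀) * (P z - poleTerm (p : ℂ) z)) =ᶠ[𝓝 0] fun z => -(z * deriv f z) := by
  obtain ⟨-, -, -, hfw, -, -, -, hPeq⟩ := hf
  have hnear : ∀ᶠ z in 𝓝 (0 : ℂ), z ∈ ball (0 : ℂ) 1 ∧ z ≠ p :=
    Filter.Eventually.and (ball_mem_nhds 0 one_pos) (eventually_ne_nhds hp.symm)
  filter_upwards [hnear] with z ⟨hz, hzp⟩
  have hw : f z - w₀ ≠ 0 := sub_ne_zero.mpr (hfw z hz hzp)
  rw [hPeq z hz hzp, poleTerm]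
  field_simp
  ring

end SigmaStarWith

theorem stmt_6_general (p : ℝ) (hp : 0 < p ∧ p < 1) (w₀ : ℂ)
    (f P : ℂ → ℂ) (hf : SigmaStarWith p w₀ f P) :
    iteratedDeriv 2 P 0 / 2 =
      (p : ℂ) ^ 2 + 1 / (p : ℂ) ^ 2 + (deriv P 0 - ((p : ℂ) + 1 / p)) ^ 2 +
        2 * a2 f * (deriv P 0 - ((p : ℂ) + 1 / p)) := by
  have hp0 : (p : ℂ) ≠ 0 := ofReal_ne_zero.mpr hp.1.ne'
  have ⟨_, _, hf'0, _, hPd, hP0, _⟩ := hf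
  have hP : AnalyticAt ℂ P 0 := hPd.analyticAt (ball_mem_nhds 0 one_pos)
  have hR : AnalyticAt ℂ (poleTerm (p : ℂ)) 0 := analyticAt_poleTerm_zero hp0
  have key := iteratedDeriv_two_eq_of_mul_eventuallyEq (Q := fun z => P z - poleTerm (p : ℂ) z)
    (hf.analyticAt (mem_ball_self one_pos) hp0.symm) (hP.sub hR)
    (hf.mul_sub_poleTerm_eventuallyEq hp0) (by simp [hP0, poleTerm, hp0]) hf'0
  rw [iteratedDeriv_fun_sub hP.contDiffAt hR.contDiffAt,
    deriv_fun_sub hP.differentiableAt hR.differentiableAt, ← iteratedDeriv_one (f := poleTerm _),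
    iteratedDeriv_poleTerm_zero hp0 two_pos, iteratedDeriv_poleTerm_zero hp0 one_pos] at key
  rw [a2]
  linear_combination key / 2

theorem stmt_6 (p : ℝ) (hp : 0 < p ∧ p < 1) (w₀ : ℂ) (hw : w₀ ≠ 0)
    (f P : ℂ → ℂ) (hf : SigmaStarWith p w₀ f P) :
    iteratedDeriv 2 P 0 / 2 =
      (p : ℂ) ^ 2 + 1 / (p : ℂ) ^ 2 + (deriv P 0 - ((p : ℂ) + 1 / p)) ^ 2 +
        2 * a2 f * (deriv P 0 - ((p : ℂ) + 1 / p)) :=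
  stmt_6_general p hp w₀ f P hf
end

section
/- Let p ∈ (0,1) and let c₁, c₂ ∈ ℂ satisfy |c₁| ≤ 1 and |c₂| ≤ 1 − |c₁|². Then |c₁² − c₂ + p² − 2 c₁ p| ≤ |1 + p² − 2 c₁ p|. -/
open Complex Metric Set

/-! Completing the square, the left-hand side is `‖(c₁ - p)² - c₂‖ ≤ ‖c₁ - p‖² + 1 - ‖c₁‖²`,
and for real `p` this bound is exactly the real part of `1 + p² - 2 c₁ p`. -/

namespace Complex

lemma norm_sub_ofReal_sq (z : ℂ) (p : ℝ) : ‖z - p‖ ^ 2 = ‖z‖ ^ 2 + p ^ 2 - 2 * p * z.re := by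
  rw [Complex.sq_norm, Complex.sq_norm, normSq_sub]
  simp only [normSq_ofReal, conj_ofReal, re_mul_ofReal]
  ring

lemma re_one_add_sq_sub_two_mul_ofReal (z : ℂ) (p : ℝ) :
    (1 + (p : ℂ) ^ 2 - 2 * z * p).re = 1 + p ^ 2 - 2 * p * z.re := by
  simp only [sub_re, add_re, one_re, ← ofReal_pow, ofReal_re, ofReal_im, mul_re, re_ofNat, im_ofNat]
  ring

end Complex

theorem stmt_8_general (p : ℝ) (c₁ c₂ : ℂ) (h2 : ‖c₂‖ ≤ 1 - ‖c₁‖ ^ 2) :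
    ‖c₁ ^ 2 - c₂ + (p : ℂ) ^ 2 - 2 * c₁ * p‖ ≤
      ‖1 + (p : ℂ) ^ 2 - 2 * c₁ * p‖ := by
  calc ‖c₁ ^ 2 - c₂ + (p : ℂ) ^ 2 - 2 * c₁ * p‖ = ‖(c₁ - p) ^ 2 - c₂‖ := by ring_nf
    _ ≤ ‖c₁ - p‖ ^ 2 + ‖c₂‖ := by rw [← norm_pow]; exact norm_sub_le _ _
    _ ≤ ‖c₁‖ ^ 2 + p ^ 2 - 2 * p * c₁.re + (1 - ‖c₁‖ ^ 2) := by
        rw [Complex.norm_sub_ofReal_sq]; linarith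
    _ = (1 + (p : ℂ) ^ 2 - 2 * c₁ * p).re := by
        rw [Complex.re_one_add_sq_sub_two_mul_ofReal]; ring
    _ ≤ ‖1 + (p : ℂ) ^ 2 - 2 * c₁ * p‖ := Complex.re_le_norm _

theorem stmt_8 (p : ℝ) (hp : 0 < p ∧ p < 1) (c₁ c₂ : ℂ)
    (h1 : ‖c₁‖ ≤ 1) (h2 : ‖c₂‖ ≤ 1 - ‖c₁‖ ^ 2) :
    ‖c₁ ^ 2 - c₂ + (p : ℂ) ^ 2 - 2 * c₁ * p‖ ≤
      ‖1 + (p : ℂ) ^ 2 - 2 * c₁ * p‖ :=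
  stmt_8_general p c₁ c₂ h2
end

section
/- Let p ∈ (0,1) and let c₁, c₂ ∈ ℂ satisfy |c₁| ≤ 1, |c₂| ≤ 1 − |c₁|², and Im c₁ ≠ 0. Then the strict inequality |c₁² − c₂ + p² − 2 c₁ p| < |1 + p² − 2 c₁ p| holds; equivalently, equality |c₁² − c₂ + p² − 2 c₁ p| = |1 + p² − 2 c₁ p| can occur only when c₁ is real. -/
/-!
Since `c₁² − c₂ + p² − 2c₁p = (c₁ − p)² − c₂`, the left side is at most
`|c₁ − p|² + 1 − |c₁|² = Re (1 + p² − 2c₁p)`. A real part is strictly smaller than the modulus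
as soon as the imaginary part, here `−2p Im c₁`, is nonzero.
-/

open Complex Metric Set

namespace Complex

lemma norm_sub_ofReal_sq_add_one_sub_norm_sq (c : ℂ) (t : ℝ) :
    ‖c - t‖ ^ 2 + (1 - ‖c‖ ^ 2) = (1 + (t : ℂ) ^ 2 - 2 * c * t).re := by
  rw [Complex.sq_norm, Complex.sq_norm]
  simp only [normSq_apply, sub_re, sub_im, add_re, mul_re, ofReal_re, ofReal_im, sq, one_re,
    re_ofNat, im_ofNat]
  ring

lemma im_one_add_ofReal_sq_sub_two_mul (c : ℂ) (t : ℝ) :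
    (1 + (t : ℂ) ^ 2 - 2 * c * t).im = -(2 * t * c.im) := by
  simp only [sq, sub_im, add_im, mul_im, one_im, ofReal_re, ofReal_im, re_ofNat, im_ofNat]
  ring

lemma norm_sq_sub_ofReal_sub_le_re {c₁ c₂ : ℂ} (t : ℝ) (h₂ : ‖c₂‖ ≤ 1 - ‖c₁‖ ^ 2) :
    ‖(c₁ - t) ^ 2 - c₂‖ ≤ (1 + (t : ℂ) ^ 2 - 2 * c₁ * t).re :=
  calc ‖(c₁ - t) ^ 2 - c₂‖ ≤ ‖c₁ - t‖ ^ 2 + ‖c₂‖ := (norm_sub_le _ _).trans_eq (by rw [norm_pow])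
    _ ≤ ‖c₁ - t‖ ^ 2 + (1 - ‖c₁‖ ^ 2) := by gcongr
    _ = _ := norm_sub_ofReal_sq_add_one_sub_norm_sq c₁ t

end Complex

theorem stmt_9_general (p : ℝ) (hp : 0 < p ∧ p < 1) (c₁ c₂ : ℂ)
    (h2 : ‖c₂‖ ≤ 1 - ‖c₁‖ ^ 2)
    (him : c₁.im ≠ 0) :
    ‖c₁ ^ 2 - c₂ + (p : ℂ) ^ 2 - 2 * c₁ * p‖ <
      ‖1 + (p : ℂ) ^ 2 - 2 * c₁ * p‖ := by
  have him_ne : (1 + (p : ℂ) ^ 2 - 2 * c₁ * p).im ≠ 0 := by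
    rw [im_one_add_ofReal_sq_sub_two_mul]
    exact neg_ne_zero.mpr (mul_ne_zero (mul_ne_zero two_ne_zero hp.1.ne') him)
  calc ‖c₁ ^ 2 - c₂ + (p : ℂ) ^ 2 - 2 * c₁ * p‖ = ‖(c₁ - p) ^ 2 - c₂‖ := by ring_nf
    _ ≤ (1 + (p : ℂ) ^ 2 - 2 * c₁ * p).re := norm_sq_sub_ofReal_sub_le_re p h2
    _ ≤ |(1 + (p : ℂ) ^ 2 - 2 * c₁ * p).re| := le_abs_self _
    _ < ‖1 + (p : ℂ) ^ 2 - 2 * c₁ * p‖ := abs_re_lt_norm.mpr him_ne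

theorem stmt_9 (p : ℝ) (hp : 0 < p ∧ p < 1) (c₁ c₂ : ℂ)
    (h1 : ‖c₁‖ ≤ 1) (h2 : ‖c₂‖ ≤ 1 - ‖c₁‖ ^ 2)
    (him : c₁.im ≠ 0) :
    ‖c₁ ^ 2 - c₂ + (p : ℂ) ^ 2 - 2 * c₁ * p‖ <
      ‖1 + (p : ℂ) ^ 2 - 2 * c₁ * p‖ :=
  stmt_9_general p hp c₁ c₂ h2 him
end

section
/- Let p ∈ (0,1), let w₀ ∈ ℂ with w₀ ≠ 0, and let f ∈ Σ*(p,w₀). Then |p + 1/p + 1/w₀| ≤ 2. -/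
open Complex Metric Set

/-! The Cayley transform `ω = (P - 1)/(P + 1)` of the Carathéodory function `P` is a Schwarz
function, so `P'(0) = 2 ω'(0)` has modulus at most `2` by the Schwarz lemma. On the other hand
`f` is holomorphic near `0`, and differentiating the formula defining `P` at `0`, where `f 0 = 0`
and `f' 0 = 1`, gives `P'(0) = 1/w₀ + 1/p + p`. -/

open Filter Topology

namespace Complex

theorem norm_sub_one_lt_norm_add_one {w : ℂ} (hw : 0 < w.re) : ‖w - 1‖ < ‖w + 1‖ := by
  rw [← sq_lt_sq₀ (norm_nonneg _) (norm_nonneg _), Complex.sq_norm, Complex.sq_norm]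
  simp only [normSq_apply, sub_re, add_re, sub_im, add_im, one_re, one_im]
  nlinarith

end Complex

theorem schwarzOf_cayley {P : ℂ → ℂ} (hP : DifferentiableOn ℂ P (ball 0 1)) (hP0 : P 0 = 1)
    (hre : ∀ z ∈ ball (0 : ℂ) 1, 0 < (P z).re) :
    SchwarzOf P (fun z => (P z - 1) / (P z + 1)) := by
  have hne : ∀ z ∈ ball (0 : ℂ) 1, P z + 1 ≠ 0 := fun z hz h => by
    have := congrArg re h
    simp only [add_re, one_re, zero_re] at this
    linarith [hre z hz]
  refine ⟨(hP.sub_const 1).div (hP.add_const 1) hne, fun z hz => ?_, by simp [hP0], fun z hz => ?_⟩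
  · rw [mem_ball_zero_iff, norm_div, div_lt_one (norm_pos_iff.mpr (hne z hz))]
    exact Complex.norm_sub_one_lt_norm_add_one (hre z hz)
  · field_simp [hne z hz]
    ring

theorem SchwarzOf.deriv_eq {P ω : ℂ → ℂ} (h : SchwarzOf P ω) : deriv P 0 = 2 * deriv ω 0 := by
  obtain ⟨hω, -, hω0, hPω⟩ := h
  have hball : ball (0 : ℂ) 1 ∈ 𝓝 0 := ball_mem_nhds 0 one_pos
  have hωd : HasDerivAt ω (deriv ω 0) 0 := (hω.differentiableAt hball).hasDerivAt
  have hquot : HasDerivAt (fun z => (1 + ω z) / (1 - ω z)) (2 * deriv ω 0) 0 :=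
    ((hωd.const_add 1).fun_div (hωd.const_sub 1) (by simp [hω0])).congr_deriv
      (by rw [hω0]; ring)
  exact (hquot.congr_of_eventuallyEq (eventually_of_mem hball hPω)).deriv

theorem SchwarzOf.norm_deriv_le_two {P ω : ℂ → ℂ} (h : SchwarzOf P ω) : ‖deriv P 0‖ ≤ 2 := by
  obtain ⟨hω, hmaps, hω0, -⟩ := id h
  have hω' : ‖deriv ω 0‖ ≤ 1 := norm_deriv_le_one_of_mapsTo_ball hω
    (by rw [hω0]; exact hmaps.mono_right ball_subset_closedBall) one_pos
  rw [h.deriv_eq, norm_mul, norm_ofNat]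
  linarith

theorem analyticAt_of_eq_div_sub {U : Set ℂ} (hU : IsOpen U) {c p : ℂ} (hc : c ∈ U)
    (hcp : c ≠ p) {f g : ℂ → ℂ} (hg : DifferentiableOn ℂ g U)
    (hfg : ∀ z ∈ U, z ≠ p → f z = g z / (z - p)) : AnalyticAt ℂ f c := by
  have hquot : AnalyticAt ℂ (fun z => g z / (z - p)) c :=
    (hg.analyticAt (hU.mem_nhds hc)).div (analyticAt_id.sub analyticAt_const) (sub_ne_zero.2 hcp)
  refine hquot.congr ?_
  filter_upwards [hU.mem_nhds hc, eventually_ne_nhds hcp] with z hzU hzp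
  exact (hfg z hzU hzp).symm

theorem hasDerivAt_sigmaStarFormula_zero {p w₀ : ℂ} (hp : p ≠ 0) (hw : w₀ ≠ 0) {f : ℂ → ℂ}
    (hf : AnalyticAt ℂ f 0) (hf0 : f 0 = 0) (hf1 : deriv f 0 = 1) :
    HasDerivAt (fun z => -z * deriv f z / (f z - w₀) - p / (z - p) + p * z / (1 - p * z))
      (p + 1 / p + 1 / w₀) 0 := by
  have hf' : HasDerivAt f 1 0 := hf1 ▸ hf.differentiableAt.hasDerivAt
  have hf'' : HasDerivAt (deriv f) (deriv (deriv f) 0) 0 := hf.deriv.differentiableAt.hasDerivAt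
  have h₁ : HasDerivAt (fun z => -z * deriv f z / (f z - w₀)) (1 / w₀) 0 :=
    (((hasDerivAt_id 0).neg.fun_mul hf'').fun_div (hf'.sub_const w₀)
      (by simpa [hf0] using hw)).congr_deriv (by rw [hf0, hf1]; field_simp; ring)
  have h₂ : HasDerivAt (fun z => p / (z - p)) (-(1 / p)) 0 :=
    ((hasDerivAt_const 0 p).fun_div ((hasDerivAt_id 0).sub_const p)
      (by simpa using hp)).congr_deriv (by rw [id]; field_simp; ring)
  have h₃ : HasDerivAt (fun z => p * z / (1 - p * z)) p 0 :=
    (((hasDerivAt_id 0).const_mul p).fun_div (((hasDerivAt_id 0).const_mul p).const_sub 1)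
      (by simp)).congr_deriv (by simp)
  exact ((h₁.sub h₂).add h₃).congr_deriv (by ring)

theorem SigmaStarWith.hasDerivAt_zero {p : ℝ} (hp : p ≠ 0) {w₀ : ℂ} (hw : w₀ ≠ 0) {f P : ℂ → ℂ}
    (h : SigmaStarWith p w₀ f P) : HasDerivAt P (p + 1 / p + 1 / w₀) 0 := by
  obtain ⟨⟨g, hg, -, hfg⟩, hf0, hf1, -, -, -, -, hP⟩ := h
  have hp0 : (0 : ℂ) ≠ p := by exact_mod_cast hp.symm
  have hf : AnalyticAt ℂ f 0 :=
    analyticAt_of_eq_div_sub isOpen_ball (mem_ball_self one_pos) hp0 hg hfg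
  refine (hasDerivAt_sigmaStarFormula_zero hp0.symm hw hf hf0 hf1).congr_of_eventuallyEq ?_
  filter_upwards [ball_mem_nhds (0 : ℂ) one_pos, eventually_ne_nhds hp0] with z hz hzp
  exact hP z hz hzp

theorem stmt_11 (p : ℝ) (hp : 0 < p ∧ p < 1) (w₀ : ℂ) (hw : w₀ ≠ 0)
    (f : ℂ → ℂ) (hf : SigmaStar p w₀ f) :
    ‖(p : ℂ) + 1 / p + 1 / w₀‖ ≤ 2 := by
  obtain ⟨P, hP⟩ := hf
  rw [← (hP.hasDerivAt_zero hp.1.ne' hw).deriv]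
  obtain ⟨-, -, -, -, hPd, hP0, hPre, -⟩ := hP
  exact (schwarzOf_cayley hPd hP0 hPre).norm_deriv_le_two
end
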